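/- The divergence of the scalar superenergy tensor on a curved manifold with □φ = 0 satisfies ∇^α S_{αβλμ} = 2 ∇_β∇_{(λ}φ R_{μ)ρ} ∇^ρφ − g_{λμ} R^{σρ} ∇_β∇_ρφ ∇_σφ − ∇_σφ (2 ∇^ρ∇_{(λ}φ R^σ{}_{μ)ρβ} + g_{λμ} R^σ{}_{ρβτ} ∇^ρ∇^τφ). -/

import Mathlib

/-!
The divergence of `S` is computed by the Leibniz rule. Contracting with the metric, all terms
containing `∇_β` of the Hessian cancel, so only two kinds of terms survive: the divergence
`∇^a∇_a∇_cφ` of the Hessian, and the non-symmetric part `∇_a∇_b∇_cφ - ∇_b∇_c∇_aφ` of the third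
derivatives. Both vanish in flat space; on a curved manifold the Ricci identity turns the second
into `-∇^sφ R_{scab}`, and together with the wave equation the first into `R_{cs}∇^sφ`.
-/

/-- The basic superenergy tensor of a (massless) scalar field,
`S_{αβλμ} = ∇_α∇_λφ ∇_μ∇_βφ + ∇_α∇_μφ ∇_β∇_λφ − g_{αβ} ∇_λ∇^ρφ ∇_μ∇_ρφ
  − g_{λμ} ∇_α∇^ρφ ∇_β∇_ρφ + (1/2) g_{αβ} g_{λμ} ∇_σ∇_ρφ ∇^σ∇^ρφ`,
written in terms of the Hessian `H a b = ∇_a∇_b φ`, the metric `g` and its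
inverse `ginv`. -/
noncomputable def Ssc {ι : Type*} [Fintype ι] (g ginv : ι → ι → ℝ)
    (H : ι → ι → ℝ) (α β l μ : ι) : ℝ :=
  H α l * H μ β + H α μ * H β l
  - g α β * (∑ ρ, ∑ ρ', ginv ρ ρ' * H l ρ * H μ ρ')
  - g l μ * (∑ ρ, ∑ ρ', ginv ρ ρ' * H α ρ * H β ρ')
  + (1/2) * g α β * g l μ *
      (∑ σ, ∑ ρ, ∑ σ', ∑ ρ', ginv σ σ' * ginv ρ ρ' * H σ ρ * H σ' ρ')

/-- The covariant derivative `∇_n S_{αβλμ}` of the scalar superenergy tensor,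
obtained by the Leibniz rule from its defining formula (`∇g = 0`);
`DH n a b = ∇_n ∇_a ∇_b φ` is the derivative of the Hessian `H`. -/
noncomputable def DSsc {ι : Type*} [Fintype ι] (g ginv : ι → ι → ℝ)
    (H : ι → ι → ℝ) (DH : ι → ι → ι → ℝ) (n α β l μ : ι) : ℝ :=
  DH n α l * H μ β + H α l * DH n μ β + DH n α μ * H β l + H α μ * DH n β l
  - g α β * (∑ ρ, ∑ ρ', ginv ρ ρ' * (DH n l ρ * H μ ρ' + H l ρ * DH n μ ρ'))
  - g l μ * (∑ ρ, ∑ ρ', ginv ρ ρ' * (DH n α ρ * H β ρ' + H α ρ * DH n β ρ'))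
  + (1/2) * g α β * g l μ * (∑ σ, ∑ ρ, ∑ σ', ∑ ρ',
      ginv σ σ' * ginv ρ ρ' * (DH n σ ρ * H σ' ρ' + H σ ρ * DH n σ' ρ'))

/-- The Ricci tensor `R_{μβ} = R^α{}_{μαβ}` obtained from the (lowered) Riemann
tensor by contraction with the inverse metric. -/
noncomputable def RicciT {ι : Type*} [Fintype ι] (ginv : ι → ι → ℝ)
    (R : ι → ι → ι → ι → ℝ) (μ β : ι) : ℝ :=
  ∑ a, ∑ a', ginv a a' * R a' μ a β

section Contraction

variable {ι : Type*} [Fintype ι]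

def contract (G F : ι → ι → ℝ) : ℝ := ∑ a, ∑ b, G a b * F a b

variable (G G' : ι → ι → ℝ)

theorem contract_add (F F' : ι → ι → ℝ) :
    contract G (fun a b => F a b + F' a b) = contract G F + contract G F' := by
  simp only [contract, mul_add, Finset.sum_add_distrib]

theorem contract_sub (F F' : ι → ι → ℝ) :
    contract G (fun a b => F a b - F' a b) = contract G F - contract G F' := by
  simp only [contract, mul_sub, Finset.sum_sub_distrib]

theorem contract_neg (F : ι → ι → ℝ) :
    contract G (fun a b => -F a b) = -contract G F := by
  simp only [contract, mul_neg, Finset.sum_neg_distrib]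

theorem contract_mul_left (c : ℝ) (F : ι → ι → ℝ) :
    contract G (fun a b => c * F a b) = c * contract G F := by
  simp only [contract, Finset.mul_sum, mul_left_comm]

theorem contract_mul_right (c : ℝ) (F : ι → ι → ℝ) :
    contract G (fun a b => F a b * c) = contract G F * c := by
  simp only [contract, Finset.sum_mul, mul_assoc]

theorem contract_congr {F F' : ι → ι → ℝ} (h : ∀ a b, F a b = F' a b) :
    contract G F = contract G F' := by
  simp only [contract, h]

theorem contract_comm (F : ι → ι → ι → ι → ℝ) :
    contract G (fun a b => contract G' (F a b))
      = contract G' (fun c d => contract G (fun a b => F a b c d)) := by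
  simp only [contract, Finset.mul_sum]
  calc _ = ∑ a, ∑ c, ∑ b, ∑ d, G a b * (G' c d * F a b c d) :=
        Finset.sum_congr rfl fun _ _ => Finset.sum_comm
    _ = ∑ c, ∑ a, ∑ d, ∑ b, G a b * (G' c d * F a b c d) :=
        Finset.sum_comm.trans <| Finset.sum_congr rfl fun _ _ =>
          Finset.sum_congr rfl fun _ _ => Finset.sum_comm
    _ = _ := Finset.sum_congr rfl fun _ _ => Finset.sum_comm.trans <|
        Finset.sum_congr rfl fun _ _ => Finset.sum_congr rfl fun _ _ =>
          Finset.sum_congr rfl fun _ _ => by ring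

theorem contract_contract_mul_left (u : ι → ι → ℝ) (F : ι → ι → ι → ι → ℝ) :
    contract G (fun a b => contract G' (fun c d => u c d * F a b c d))
      = contract G' (fun c d => u c d * contract G (fun a b => F a b c d)) := by
  rw [contract_comm]
  exact contract_congr _ fun c d => by rw [← contract_mul_left]

theorem contract_mul_contract (f u : ι → ι → ℝ) (F : ι → ι → ι → ι → ℝ) :
    contract G (fun a b => f a b * contract G' (fun c d => u c d * F a b c d))
      = contract G' (fun c d => u c d * contract G (fun a b => f a b * F a b c d)) := by
  rw [← contract_contract_mul_left]
  exact contract_congr _ fun a b => by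
    rw [← contract_mul_left]
    exact contract_congr _ fun c d => by ring

theorem contract_transpose (hG : ∀ a b, G a b = G b a) (F : ι → ι → ℝ) :
    contract G (fun a b => F b a) = contract G F := by
  rw [contract, Finset.sum_comm]
  simp only [contract, hG]

theorem sum_mul_mul_eq_contract (hG : ∀ a b, G a b = G b a) (u X : ι → ℝ) :
    ∑ a, ∑ b, G a b * u a * X b = contract G (fun a b => u b * X a) := by
  rw [← contract_transpose G hG]
  simp only [contract, mul_assoc]

theorem contract_inv_mul [DecidableEq ι] {g : ι → ι → ℝ}
    (hinv : ∀ a b, ∑ c, G a c * g c b = if a = b then 1 else 0) (c : ι) (f : ι → ℝ) :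
    contract G (fun a b => g b c * f a) = f c := by
  simp only [contract, ← mul_assoc, ← Finset.sum_mul, hinv, ite_mul, one_mul, zero_mul,
    Finset.sum_ite_eq', Finset.mem_univ, if_true]

theorem sum_four_eq_contract_contract (X : ι → ι → ι → ι → ℝ) :
    ∑ a, ∑ b, ∑ c, ∑ d, G a c * (G' b d * X a b c d)
      = contract G (fun a c => contract G' (fun b d => X a b c d)) := by
  simp only [contract, Finset.mul_sum]
  exact Finset.sum_congr rfl fun a _ => Finset.sum_comm

end Contraction

section Superenergy

variable {ι : Type*} [Fintype ι] {g ginv H : ι → ι → ℝ} {DH : ι → ι → ι → ℝ}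

theorem sum_four_leibniz_eq_two_mul (hginv : ∀ a b, ginv a b = ginv b a)
    (hDH : ∀ n a b, DH n a b = DH n b a) (a : ι) :
    ∑ σ, ∑ ρ, ∑ σ', ∑ ρ', ginv σ σ' * ginv ρ ρ' * (DH a σ ρ * H σ' ρ' + H σ ρ * DH a σ' ρ')
      = 2 * contract ginv (fun b b' => contract ginv (fun c d => H b' c * DH a d b)) := by
  simp only [mul_assoc]
  rw [sum_four_eq_contract_contract]
  simp only [contract_add, two_mul]
  congr 1
  · exact contract_congr _ fun b b' => by
      rw [← contract_transpose ginv hginv]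
      exact contract_congr _ fun c d => by rw [hDH, mul_comm]
  · exact (contract_transpose ginv hginv _).symm.trans
      (contract_congr _ fun b b' => contract_congr _ fun c d => by rw [hDH])

theorem contract_DSsc [DecidableEq ι] (hginv : ∀ a b, ginv a b = ginv b a)
    (hinv : ∀ a b, ∑ c, ginv a c * g c b = if a = b then 1 else 0)
    (hH : ∀ a b, H a b = H b a) (hDH : ∀ n a b, DH n a b = DH n b a) (β l μ : ι) :
    contract ginv (fun a b => DSsc g ginv H DH a b β l μ)
      = contract ginv (fun a b => DH a b l) * H μ β
        + contract ginv (fun a b => DH a b μ) * H β l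
        + contract ginv (fun a b => H b l * (DH a β μ - DH β μ a))
        + contract ginv (fun a b => H b μ * (DH a β l - DH β l a))
        - g l μ * (contract ginv (fun c d => H β d * contract ginv (fun a b => DH a b c))
          + contract ginv (fun a b =>
              contract ginv (fun c d => H b c * (DH a β d - DH β d a)))) := by
  have hgαβ : contract ginv (fun a b => g b β *
      contract ginv (fun c d => DH a l c * H μ d + H l c * DH a μ d))
      = contract ginv (fun a b => H b μ * DH β l a)
        + contract ginv (fun a b => H b l * DH β μ a) := by
    rw [contract_inv_mul ginv hinv, contract_add,
      ← contract_transpose ginv hginv (fun c d => H l c * DH β μ d)]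
    congr 1 <;> exact contract_congr _ fun a b => by rw [hH, mul_comm]
  have hnormSq : contract ginv (fun a b => 1 / 2 * g b β * g l μ * ∑ σ, ∑ ρ, ∑ σ', ∑ ρ',
      ginv σ σ' * ginv ρ ρ' * (DH a σ ρ * H σ' ρ' + H σ ρ * DH a σ' ρ'))
      = g l μ * contract ginv (fun a b => contract ginv (fun c d => H b c * DH β d a)) := by
    simp only [sum_four_leibniz_eq_two_mul hginv hDH]
    calc _ = contract ginv (fun a b => g b β * (g l μ *
          contract ginv (fun b b' => contract ginv (fun c d => H b' c * DH a d b)))) :=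
          contract_congr _ fun a b => by ring
      _ = _ := contract_inv_mul ginv hinv β _
  have hdiv : contract ginv (fun a b => contract ginv (fun c d => DH a b c * H β d))
      = contract ginv (fun c d => H β d * contract ginv (fun a b => DH a b c)) := by
    simp only [mul_comm (DH _ _ _)]
    exact contract_contract_mul_left ginv ginv _ _
  calc _ = contract ginv (fun a b => DH a b l) * H μ β
        + contract ginv (fun a b => H b l * DH a μ β)
        + contract ginv (fun a b => DH a b μ) * H β l
        + contract ginv (fun a b => H b μ * DH a β l)
        - contract ginv (fun a b => g b β *
            contract ginv (fun c d => DH a l c * H μ d + H l c * DH a μ d))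
        - g l μ * contract ginv (fun a b =>
            contract ginv (fun c d => DH a b c * H β d + H b c * DH a β d))
        + contract ginv (fun a b => 1 / 2 * g b β * g l μ * ∑ σ, ∑ ρ, ∑ σ', ∑ ρ',
            ginv σ σ' * ginv ρ ρ' * (DH a σ ρ * H σ' ρ' + H σ ρ * DH a σ' ρ')) := by
        -- the double sums in `DSsc` are `contract ginv` by definition
        conv_lhs => simp only [DSsc, contract_add, contract_sub, contract_mul_left,
          contract_mul_right]
        rfl
    _ = _ := by
      rw [hgαβ, hnormSq]
      simp only [contract_add, hdiv, hDH _ μ β, mul_sub, contract_sub]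
      ring

end Superenergy

section Curvature

variable {ι : Type*} [Fintype ι] {ginv : ι → ι → ℝ} {R : ι → ι → ι → ι → ℝ}

/-- `∇^s φ R_{s x a y}`, the curvature term in the commutator of covariant derivatives. -/
def gradRiemann (ginv : ι → ι → ℝ) (dφ : ι → ℝ) (R : ι → ι → ι → ι → ℝ) (x a y : ι) : ℝ :=
  contract ginv (fun s s' => dφ s' * R s x a y)

theorem ricciT_comm (hginv : ∀ a b, ginv a b = ginv b a)
    (hR3 : ∀ a b c d, R a b c d = R c d a b) (x y : ι) :
    RicciT ginv R x y = RicciT ginv R y x :=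
  (contract_transpose ginv hginv _).symm.trans (contract_congr _ fun _ _ => hR3 _ _ _ _)

theorem contract_riemann_eq_neg_ricciT (hginv : ∀ a b, ginv a b = ginv b a)
    (hR2 : ∀ a b c d, R a b c d = - R a b d c) (hR3 : ∀ a b c d, R a b c d = R c d a b)
    (s x : ι) :
    contract ginv (fun a b => R s b a x) = -RicciT ginv R x s := by
  show _ = -contract ginv (fun a a' => R a' x a s)
  rw [← contract_neg, ← contract_transpose ginv hginv]
  exact contract_congr _ fun a b => by rw [hR3, hR2]

theorem contract_thirdDeriv_eq_ricciT {dφ : ι → ℝ} {DH : ι → ι → ι → ℝ}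
    (hginv : ∀ a b, ginv a b = ginv b a)
    (hR2 : ∀ a b c d, R a b c d = - R a b d c) (hR3 : ∀ a b c d, R a b c d = R c d a b)
    (hDH : ∀ n a b, DH n a b = DH n b a)
    (hRicci : ∀ a b c, DH a b c - DH b a c = -gradRiemann ginv dφ R c a b)
    (hwave : ∀ n, contract ginv (DH n) = 0) (x : ι) :
    contract ginv (fun a b => DH a b x)
      = contract ginv (fun s s' => dφ s' * RicciT ginv R x s) := by
  have hcomm : ∀ a b, DH a b x = DH x a b - gradRiemann ginv dφ R b a x := fun a b => by
    linear_combination hDH a b x + hRicci a x b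
  rw [contract_congr _ hcomm, contract_sub, hwave, zero_sub]
  simp only [gradRiemann]
  rw [contract_contract_mul_left]
  simp only [contract_riemann_eq_neg_ricciT hginv hR2 hR3, mul_neg, contract_neg, neg_neg]

theorem contract_mul_gradRiemann {dφ : ι → ℝ} (hginv : ∀ a b, ginv a b = ginv b a)
    (f : ι → ℝ) (x y : ι) :
    contract ginv (fun a b => f b * gradRiemann ginv dφ R x a y)
      = ∑ σ, ∑ s, ginv σ s * dφ σ * ∑ ρ, ∑ ρ', ginv ρ ρ' * (f ρ' * R s x ρ y) := by
  rw [sum_mul_mul_eq_contract ginv hginv]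
  exact contract_mul_contract ginv ginv (fun _ b => f b) (fun _ s' => dφ s') _

theorem contract_contract_hessian_gradRiemann {dφ : ι → ℝ} {H : ι → ι → ℝ}
    (hginv : ∀ a b, ginv a b = ginv b a) (hR2 : ∀ a b c d, R a b c d = - R a b d c)
    (hH : ∀ a b, H a b = H b a) (β : ι) :
    contract ginv (fun a b => contract ginv (fun c d => H b c * gradRiemann ginv dφ R d a β))
      = -∑ σ, ∑ s, ginv σ s * dφ σ *
          ∑ ρ, ∑ τ, ∑ ρ', ∑ τ', ginv ρ ρ' * ginv τ τ' * H ρ' τ' * R s ρ β τ := by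
  rw [sum_mul_mul_eq_contract ginv hginv, ← contract_neg]
  simp only [gradRiemann, mul_assoc, sum_four_eq_contract_contract]
  rw [contract_congr _ fun a b => contract_mul_contract ginv ginv (fun c _ => H b c)
    (fun _ s' => dφ s') (fun _ d s _ => R s d a β), contract_contract_mul_left]
  refine contract_congr _ fun s s' => ?_
  rw [← mul_neg]
  congr 1
  rw [contract_comm, ← contract_transpose ginv hginv, ← contract_neg]
  exact contract_congr _ fun c d => by
    rw [← contract_neg]
    exact contract_congr _ fun a b => by rw [hR2, hH]; ring

theorem sum_four_ricciT (hginv : ∀ a b, ginv a b = ginv b a)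
    (hR3 : ∀ a b c d, R a b c d = R c d a b) (u w : ι → ℝ) :
    ∑ σ, ∑ ρ, ∑ σ', ∑ ρ', ginv σ σ' * ginv ρ ρ' * RicciT ginv R σ' ρ' * w ρ * u σ
      = contract ginv (fun c d =>
          w d * contract ginv (fun s s' => u s' * RicciT ginv R c s)) := by
  simp only [mul_assoc]
  rw [sum_four_eq_contract_contract, contract_comm, ← contract_transpose ginv hginv]
  refine contract_congr _ fun c d => ?_
  rw [← contract_mul_left, ← contract_transpose ginv hginv]
  exact contract_congr _ fun s s' => by rw [ricciT_comm hginv hR3]; ring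

end Curvature

theorem scalar_superenergy_divergence_general {ι : Type*} [Fintype ι] [DecidableEq ι]
    (g ginv : ι → ι → ℝ) (R : ι → ι → ι → ι → ℝ)
    (dφ : ι → ℝ) (H : ι → ι → ℝ) (DH : ι → ι → ι → ℝ)
    (hginv : ∀ a b, ginv a b = ginv b a)
    (hinv : ∀ a b, ∑ c, ginv a c * g c b = if a = b then 1 else 0)
    (hR2 : ∀ a b c d, R a b c d = - R a b d c)
    (hR3 : ∀ a b c d, R a b c d = R c d a b)
    (hH : ∀ a b, H a b = H b a)
    (hDH2 : ∀ n a b, DH n a b = DH n b a)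
    (hRicciId : ∀ a l ρ, DH a l ρ - DH l a ρ
      = -∑ s, ∑ s', ginv s s' * dφ s' * R s ρ a l)
    (hwaveD : ∀ n, ∑ ρ, ∑ ρ', ginv ρ ρ' * DH n ρ ρ' = 0) :
    ∀ β l μ,
      ∑ α, ∑ α', ginv α α' * DSsc g ginv H DH α α' β l μ
        = (∑ ρ, ∑ ρ', (H β l * RicciT ginv R μ ρ + H β μ * RicciT ginv R l ρ)
              * ginv ρ ρ' * dφ ρ')
          - g l μ * (∑ σ, ∑ ρ, ∑ σ', ∑ ρ', ginv σ σ' * ginv ρ ρ' *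
              RicciT ginv R σ' ρ' * H β ρ * dφ σ)
          - (∑ σ, ∑ s, ginv σ s * dφ σ *
              ((∑ ρ, ∑ ρ', ginv ρ ρ' * (H ρ' l * R s μ ρ β + H ρ' μ * R s l ρ β))
                + g l μ * (∑ ρ, ∑ τ, ∑ ρ', ∑ τ', ginv ρ ρ' * ginv τ τ' *
                    H ρ' τ' * R s ρ β τ))) := by
  intro β l μ
  have hRicci : ∀ a b c, DH a b c - DH b a c = -gradRiemann ginv dφ R c a b := fun a b c => by
    rw [hRicciId]; simp only [gradRiemann, contract, mul_assoc]
  have hdefect : ∀ a b c, DH a b c - DH b c a = -gradRiemann ginv dφ R c a b := fun a b c => by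
    rw [← hDH2 b a c]; exact hRicci a b c
  have hdiv := contract_thirdDeriv_eq_ricciT hginv hR2 hR3 hDH2 hRicci hwaveD
  change contract ginv (fun a b => DSsc g ginv H DH a b β l μ) = _
  rw [contract_DSsc hginv hinv hH hDH2]
  simp only [hdiv, hdefect]
  have hRicciTerm : ∑ ρ, ∑ ρ',
      (H β l * RicciT ginv R μ ρ + H β μ * RicciT ginv R l ρ) * ginv ρ ρ' * dφ ρ'
      = H β l * contract ginv (fun s s' => dφ s' * RicciT ginv R μ s)
        + H β μ * contract ginv (fun s s' => dφ s' * RicciT ginv R l s) := by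
    simp only [contract, Finset.mul_sum, ← Finset.sum_add_distrib]
    exact Finset.sum_congr rfl fun _ _ => Finset.sum_congr rfl fun _ _ => by ring
  rw [hRicciTerm, sum_four_ricciT hginv hR3]
  simp only [mul_neg, contract_neg, contract_mul_gradRiemann hginv,
    contract_contract_hessian_gradRiemann hginv hR2 hH]
  simp only [mul_add, Finset.sum_add_distrib, mul_left_comm _ (g l μ), ← Finset.mul_sum]
  rw [hH μ β]
  ring

/-- On a curved manifold, for `φ` satisfying the wave equation
`□φ = 0`, the divergence of the scalar superenergy tensor is
`∇^α S_{αβλμ} = 2 ∇_β∇_{(λ}φ R_{μ)ρ} ∇^ρφ − g_{λμ} R^{σρ} ∇_β∇_ρφ ∇_σφ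
  − ∇_σφ (2 ∇^ρ∇_{(λ}φ R^σ{}_{μ)ρβ} + g_{λμ} R^σ{}_{ρβτ} ∇^ρ∇^τφ)`.
Components: `dφ σ = ∇_σ φ`, `H = ∇∇φ` (symmetric Hessian), `DH = ∇H` (symmetric
in its last two indices, and obeying the Ricci commutation identity with the
curvature), wave equation and its derivative as trace conditions; round brackets
denote symmetrization over `λ, μ`. -/
theorem scalar_superenergy_divergence {ι : Type*} [Fintype ι] [DecidableEq ι]
    (g ginv : ι → ι → ℝ) (R : ι → ι → ι → ι → ℝ)
    (dφ : ι → ℝ) (H : ι → ι → ℝ) (DH : ι → ι → ι → ℝ)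
    (hg : ∀ a b, g a b = g b a) (hginv : ∀ a b, ginv a b = ginv b a)
    (hinv : ∀ a b, ∑ c, ginv a c * g c b = if a = b then 1 else 0)
    (hR1 : ∀ a b c d, R a b c d = - R b a c d)
    (hR2 : ∀ a b c d, R a b c d = - R a b d c)
    (hR3 : ∀ a b c d, R a b c d = R c d a b)
    (hB1 : ∀ a b c d, R a b c d + R a c d b + R a d b c = 0)
    (hH : ∀ a b, H a b = H b a)
    (hDH2 : ∀ n a b, DH n a b = DH n b a)
    (hRicciId : ∀ a l ρ, DH a l ρ - DH l a ρ
      = -∑ s, ∑ s', ginv s s' * dφ s' * R s ρ a l)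
    (hwave : ∑ ρ, ∑ ρ', ginv ρ ρ' * H ρ ρ' = 0)
    (hwaveD : ∀ n, ∑ ρ, ∑ ρ', ginv ρ ρ' * DH n ρ ρ' = 0) :
    ∀ β l μ,
      ∑ α, ∑ α', ginv α α' * DSsc g ginv H DH α α' β l μ
        = (∑ ρ, ∑ ρ', (H β l * RicciT ginv R μ ρ + H β μ * RicciT ginv R l ρ)
              * ginv ρ ρ' * dφ ρ')
          - g l μ * (∑ σ, ∑ ρ, ∑ σ', ∑ ρ', ginv σ σ' * ginv ρ ρ' *
              RicciT ginv R σ' ρ' * H β ρ * dφ σ)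
          - (∑ σ, ∑ s, ginv σ s * dφ σ *
              ((∑ ρ, ∑ ρ', ginv ρ ρ' * (H ρ' l * R s μ ρ β + H ρ' μ * R s l ρ β))
                + g l μ * (∑ ρ, ∑ τ, ∑ ρ', ∑ τ', ginv ρ ρ' * ginv τ τ' *
                    H ρ' τ' * R s ρ β τ))) :=
  scalar_superenergy_divergence_general g ginv R dφ H DH hginv hinv hR2 hR3 hH hDH2 hRicciId hwaveD
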